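/- arXiv:2510.23955 — 6 statements merged into one kernel-verified Lean document; each statement's English description precedes it below -/
import Mathlib

section
/- Let X be a finite-dimensional abstract simplicial complex, and let N(X) be the nerve of the collection of maximal simplices of X. If Σ is a maximal simplex of N(X), then there exists a vertex x of X with Σ = Σ_x, the set of all maximal simplices of X containing x. -/
def IsComplex {V : Type*} (X : Set (Finset V)) : Prop :=
  (∀ s ∈ X, s.Nonempty) ∧ ∀ s ∈ X, ∀ t : Finset V, t ⊆ s → t.Nonempty → t ∈ X

def IsMaxSimplex {V : Type*} (X : Set (Finset V)) (K : Finset V) : Prop :=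
  K ∈ X ∧ ∀ L ∈ X, K ⊆ L → K = L

def FinDim {V : Type*} (X : Set (Finset V)) : Prop :=
  ∃ n : ℕ, ∀ s ∈ X, s.card ≤ n

def SigmaV {V : Type*} (X : Set (Finset V)) (x : V) : Set (Finset V) :=
  {K | IsMaxSimplex X K ∧ x ∈ K}

/-- A set of vertices of the nerve `N(X)` (i.e. of maximal simplices of `X`) all of whose
nonempty finite subsets are simplices of the nerve, i.e. have nonempty intersection. -/
def NerveClique {V : Type*} (X : Set (Finset V)) (S : Set (Finset V)) : Prop :=
  (∀ K ∈ S, IsMaxSimplex X K) ∧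
    ∀ σ : Finset (Finset V), ↑σ ⊆ S → σ.Nonempty → ∃ x : V, ∀ K ∈ σ, x ∈ K

/-- A maximal simplex of the nerve `N(X)` of the collection of maximal simplices of `X`:
a maximal collection of vertices of `N(X)` every finite subset of which is a simplex of `N(X)`. -/
def IsMaxNerveSimplex {V : Type*} (X : Set (Finset V)) (S : Set (Finset V)) : Prop :=
  NerveClique X S ∧ ∀ S' : Set (Finset V), NerveClique X S' → S ⊆ S' → S = S'

theorem exists_max_simplex {V : Type*} {X : Set (Finset V)} (hfd : FinDim X) {s : Finset V}
    (hs : s ∈ X) : ∃ K, IsMaxSimplex X K ∧ s ⊆ K := by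
  obtain ⟨n, hn⟩ := hfd
  have key : ∀ m : ℕ, ∀ s ∈ X, n ≤ s.card + m → ∃ K, IsMaxSimplex X K ∧ s ⊆ K := by
    intro m
    induction m with
    | zero =>
      intro s hs hcard
      refine ⟨s, ⟨hs, ?_⟩, subset_rfl⟩
      intro L hL hsub
      exact Finset.eq_of_subset_of_card_le hsub (le_trans (hn L hL) (by omega))
    | succ m ih =>
      intro s hs hcard
      by_cases h : ∀ L ∈ X, s ⊆ L → s = L
      · exact ⟨s, ⟨hs, h⟩, subset_rfl⟩
      · push_neg at h
        obtain ⟨L, hL, hsub, hne⟩ := h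
        have hlt : s.card < L.card := Finset.card_lt_card (hsub.ssubset_of_ne hne)
        obtain ⟨K, hK, hLK⟩ := ih L hL (by omega)
        exact ⟨K, hK, hsub.trans hLK⟩
  exact key n s hs (by omega)

theorem sigma_clique {V : Type*} (X : Set (Finset V)) (x : V) :
    NerveClique X (SigmaV X x) :=
  ⟨fun _ hL => hL.1, fun σ hσ _ => ⟨x, fun K hK => (hσ hK).2⟩⟩

/-- Every maximal simplex of the nerve `N(X)` is of the form `Σ_x` for some vertex `x`. -/
theorem stmt1 {V : Type*} (X : Set (Finset V)) (hX : IsComplex X) (hfd : FinDim X)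
    (hne : X.Nonempty) (S : Set (Finset V)) (hS : IsMaxNerveSimplex X S) :
    ∃ x : V, S = SigmaV X x := by
  classical
  obtain ⟨⟨hclS, hclσ⟩, hmax⟩ := hS
  rcases S.eq_empty_or_nonempty with hE | ⟨K₀, hK₀⟩
  · obtain ⟨s, hs⟩ := hne
    obtain ⟨K, hK, _⟩ := exists_max_simplex hfd hs
    obtain ⟨x, hx⟩ := hX.1 K hK.1
    exact ⟨x, hmax (SigmaV X x) (sigma_clique X x) (by simp [hE])⟩
  · -- minimize cardinality of finite intersections containing K₀
    have hQ : ∃ k, ∃ σ : Finset (Finset V), ↑σ ⊆ S ∧ K₀ ∈ σ ∧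
        (K₀.filter fun a => ∀ K ∈ σ, a ∈ K).card = k :=
      ⟨(K₀.filter fun a => ∀ K ∈ ({K₀} : Finset (Finset V)), a ∈ K).card,
        {K₀}, by simpa using hK₀, by simp, rfl⟩
    obtain ⟨σ, hσS, hK₀σ, hσcard⟩ := Nat.find_spec hQ
    set T := K₀.filter fun a => ∀ K ∈ σ, a ∈ K with hTdef
    have hTne : T.Nonempty := by
      obtain ⟨x, hx⟩ := hclσ σ hσS ⟨K₀, hK₀σ⟩
      exact ⟨x, Finset.mem_filter.2 ⟨hx K₀ hK₀σ, hx⟩⟩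
    have hTsub : ∀ K ∈ S, T ⊆ K := by
      intro K hK
      set σ' := insert K σ with hσ'
      set T' := K₀.filter fun a => ∀ L ∈ σ', a ∈ L with hT'def
      have hσ'S : ↑σ' ⊆ S := by
        intro L hL
        rcases Finset.mem_insert.1 hL with rfl | hL
        · exact hK
        · exact hσS hL
      have hT'T : T' ⊆ T := by
        intro a ha
        obtain ⟨ha₀, ha'⟩ := Finset.mem_filter.1 ha
        exact Finset.mem_filter.2 ⟨ha₀, fun L hL => ha' L (Finset.mem_insert_of_mem hL)⟩
      have hle : Nat.find hQ ≤ T'.card :=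
        Nat.find_le ⟨σ', hσ'S, Finset.mem_insert_of_mem hK₀σ, rfl⟩
      have hcard : T'.card = T.card := le_antisymm (Finset.card_le_card hT'T)
        (hσcard ▸ hle)
      have hTT' : T = T' := (Finset.eq_of_subset_of_card_le hT'T (le_of_eq hcard.symm)).symm
      intro a ha
      rw [hTT'] at ha
      exact (Finset.mem_filter.1 ha).2 K (Finset.mem_insert_self K σ)
    obtain ⟨x, hx⟩ := hTne
    refine ⟨x, hmax (SigmaV X x) (sigma_clique X x) ?_⟩
    intro K hK
    exact ⟨hclS K hK, hTsub K hK hx⟩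
end

section
/- Let X be a finite-dimensional abstract simplicial complex such that for all vertices a, b of X, Σ_a ⊆ Σ_b implies a = b. Then for every vertex y of X, the set Σ_y of maximal simplices containing y is a maximal simplex of the nerve N(X) of the collection of maximal simplices of X. -/
/-- If `Σ_a ⊆ Σ_b` implies `a = b` for vertices, then for every vertex `y` the collection
`Σ_y` of maximal simplices containing `y` is a maximal simplex of the nerve `N(X)`. -/
theorem stmt2 {V : Type*} (X : Set (Finset V)) (hX : IsComplex X) (hfd : FinDim X)
    (hsep : ∀ a b : V, ({a} : Finset V) ∈ X → ({b} : Finset V) ∈ X →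
      SigmaV X a ⊆ SigmaV X b → a = b)
    (y : V) (hy : ({y} : Finset V) ∈ X) :
    IsMaxNerveSimplex X (SigmaV X y) := by
  classical
  constructor
  · exact ⟨fun K hK => hK.1, fun σ hσ _ => ⟨y, fun K hK => (hσ hK).2⟩⟩
  · intro S' hS' hsub
    refine Set.Subset.antisymm hsub fun K hK => ?_
    have hKmax : IsMaxSimplex X K := hS'.1 K hK
    have hKX : K ∈ X := hKmax.1
    by_cases h : ∃ x ∈ K, ∀ M ∈ SigmaV X y, x ∈ M
    · obtain ⟨x, hxK, hx⟩ := h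
      have hxV : ({x} : Finset V) ∈ X :=
        hX.2 K hKX {x} (by simpa using hxK) ⟨x, by simp⟩
      have hyx : y = x := hsep y x hy hxV (fun M hM => ⟨hM.1, hx M hM⟩)
      exact ⟨hKmax, hyx ▸ hxK⟩
    · exfalso
      push_neg at h
      choose M hM1 hM2 using h
      set σ : Finset (Finset V) := insert K (K.attach.image fun x => M x.1 x.2) with hσdef
      have hsubσ : ↑σ ⊆ S' := by
        intro L hL
        simp only [hσdef, Finset.coe_insert, Set.mem_insert_iff, Finset.coe_image,
          Set.mem_image, Finset.mem_coe, Finset.mem_attach, true_and] at hL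
        rcases hL with rfl | ⟨x, rfl⟩
        · exact hK
        · exact hsub (hM1 _ _)
      obtain ⟨z, hz⟩ := hS'.2 σ hsubσ ⟨K, Finset.mem_insert_self _ _⟩
      have hzK : z ∈ K := hz K (Finset.mem_insert_self _ _)
      have hzM : z ∈ M z hzK :=
        hz _ (Finset.mem_insert_of_mem
          (Finset.mem_image.2 ⟨⟨z, hzK⟩, Finset.mem_attach _ _, rfl⟩))
      exact hM2 z hzK hzM
end

section
/- Let X be a finite-dimensional abstract simplicial complex satisfying: (i) for all vertices x, y, Σ_x ⊆ Σ_y implies x = y; and (ii) for every simplex K and every vertex x ∉ K, there is a maximal simplex L with K ⊆ L and x ∉ L. Then the automorphism group of X is isomorphic to the automorphism group of N(X), via the map sending an automorphism φ of X to the induced map K ↦ φ(K) on maximal simplices. -/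
/-- The automorphism group of the simplicial complex `X` (whose vertex set is all of `V`):
permutations of the vertices such that a finite vertex set is a simplex iff its image is. -/
def ComplexAut {V : Type*} [DecidableEq V] (X : Set (Finset V)) : Subgroup (Equiv.Perm V) where
  carrier := {e | ∀ s : Finset V, s ∈ X ↔ s.image e ∈ X}
  one_mem' := by intro s; simp
  mul_mem' := by
    intro a b ha hb s
    have h : s.image ⇑(a * b) = (s.image ⇑b).image ⇑a := by
      rw [Finset.image_image]; rfl
    rw [h]
    exact (hb s).trans (ha _)
  inv_mem' := by
    intro a ha s
    have h := ha (s.image ⇑a⁻¹)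
    have h2 : (s.image ⇑a⁻¹).image ⇑a = s := by
      rw [Finset.image_image]
      ext v
      simp
    rw [h2] at h
    exact h.symm

/-- The vertices of the nerve `N(X)`: maximal simplices of `X`. -/
abbrev MaxS {V : Type*} (X : Set (Finset V)) : Type _ := {K : Finset V // IsMaxSimplex X K}

/-- A simplex of the nerve `N(X)`: a nonempty finite family of maximal simplices of `X`
with nonempty common intersection. -/
def NerveSimplexS {V : Type*} (X : Set (Finset V)) (σ : Finset (MaxS X)) : Prop :=
  σ.Nonempty ∧ ∃ x : V, ∀ K ∈ σ, x ∈ K.1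

/-- The automorphism group of the nerve `N(X)`: permutations of the maximal simplices of `X`
such that a finite family is a simplex of `N(X)` iff its image is. -/
def NerveAut {V : Type*} [DecidableEq V] (X : Set (Finset V)) :
    Subgroup (Equiv.Perm (MaxS X)) where
  carrier := {e | ∀ σ : Finset (MaxS X), NerveSimplexS X σ ↔ NerveSimplexS X (σ.image e)}
  one_mem' := by intro σ; simp
  mul_mem' := by
    intro a b ha hb σ
    have h : σ.image ⇑(a * b) = (σ.image ⇑b).image ⇑a := by
      rw [Finset.image_image]; rfl
    rw [h]
    exact (hb σ).trans (ha _)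
  inv_mem' := by
    intro a ha σ
    have h := ha (σ.image ⇑a⁻¹)
    have h2 : (σ.image ⇑a⁻¹).image ⇑a = σ := by
      rw [Finset.image_image]
      ext v
      simp
    rw [h2] at h
    exact h.symm

/-!
A vertex `x` is recovered from the nerve through its star `Σ_x`. Since simplices are finite, a
family of maximal simplices all of whose finite subfamilies intersect has a common vertex; as
every simplex lies in a maximal one (finite dimension), condition (i) makes the stars exactly
the maximal such families. An automorphism of `N(X)` preserves these families, hence permutes
the stars, and the resulting permutation of the vertices is an automorphism of `X` inducing it;
by (i) again it is the only one.
-/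

open Finset Function

theorem Finset.exists_forall_mem_of_finite_subfamily {ι V : Type*} (s : ι → Finset V)
    {S : Set ι} (hS : S.Nonempty)
    (h : ∀ σ : Finset ι, ↑σ ⊆ S → σ.Nonempty → ∃ x, ∀ i ∈ σ, x ∈ s i) :
    ∃ x, ∀ i ∈ S, x ∈ s i := by
  classical
  obtain ⟨i₀, hi₀⟩ := hS
  by_contra! hmiss
  -- each point `x` of `s i₀` is missed by some `s (j x)`; then `i₀` and the `j x` have no common point
  choose j hjS hj using hmiss
  obtain ⟨x, hx⟩ := h (insert i₀ ((s i₀).image j))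
    (by simpa [Set.insert_subset_iff, Set.image_subset_iff] using ⟨hi₀, fun x _ => hjS x⟩)
    (insert_nonempty _ _)
  exact hj x (hx _ (mem_insert_of_mem (mem_image_of_mem j (hx i₀ (mem_insert_self _ _)))))

section Nerve

variable {V : Type*} {X : Set (Finset V)}

theorem FinDim.exists_isMaxSimplex_superset (hfd : FinDim X) {s : Finset V} (hs : s ∈ X) :
    ∃ K, IsMaxSimplex X K ∧ s ⊆ K := by
  obtain ⟨n, hn⟩ := hfd
  have hbdd : BddAbove (card '' {t | t ∈ X ∧ s ⊆ t}) :=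
    ⟨n, by rintro _ ⟨t, ht, rfl⟩; exact hn t ht.1⟩
  obtain ⟨K, ⟨hK, hsK⟩, hcard⟩ := Nat.sSup_mem
    (Set.Nonempty.image card (⟨s, hs, subset_rfl⟩ : {t | t ∈ X ∧ s ⊆ t}.Nonempty)) hbdd
  refine ⟨K, ⟨hK, fun L hL hKL => ?_⟩, hsK⟩
  exact eq_of_subset_of_card_le hKL (hcard ▸ le_csSup hbdd ⟨L, ⟨hL, hsK.trans hKL⟩, rfl⟩)

theorem IsComplex.mem_iff_exists_superset (hX : IsComplex X) (hfd : FinDim X) {s : Finset V} :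
    s ∈ X ↔ s.Nonempty ∧ ∃ K : MaxS X, s ⊆ K.1 := by
  refine ⟨fun hs => ?_, fun ⟨hne, K, hsK⟩ => hX.2 K.1 K.2.1 s hsK hne⟩
  obtain ⟨K, hK, hsK⟩ := hfd.exists_isMaxSimplex_superset hs
  exact ⟨hX.1 s hs, ⟨K, hK⟩, hsK⟩

def nerveStar (X : Set (Finset V)) (x : V) : Set (MaxS X) := {K | x ∈ K.1}

def FiniteSubfamiliesIntersect (X : Set (Finset V)) (S : Set (MaxS X)) : Prop :=
  ∀ σ : Finset (MaxS X), ↑σ ⊆ S → σ.Nonempty → NerveSimplexS X σ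

theorem finiteSubfamiliesIntersect_nerveStar (x : V) :
    FiniteSubfamiliesIntersect X (nerveStar X x) :=
  fun _ hσ hne => ⟨hne, x, fun _ hK => hσ hK⟩

theorem FiniteSubfamiliesIntersect.exists_subset_nerveStar {S : Set (MaxS X)}
    (hS : FiniteSubfamiliesIntersect X S) (hne : S.Nonempty) : ∃ y, S ⊆ nerveStar X y :=
  exists_forall_mem_of_finite_subfamily (fun K : MaxS X => K.1) hne
    fun σ hσ hσne => (hS σ hσ hσne).2

theorem nerveStar_nonempty (hfd : FinDim X) (hvert : ∀ x : V, ({x} : Finset V) ∈ X) (x : V) :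
    (nerveStar X x).Nonempty := by
  obtain ⟨K, hK, hxK⟩ := hfd.exists_isMaxSimplex_superset (hvert x)
  exact ⟨⟨K, hK⟩, singleton_subset_iff.1 hxK⟩

theorem eq_of_nerveStar_subset (hstar : ∀ x y : V, SigmaV X x ⊆ SigmaV X y → x = y) {x y : V}
    (h : nerveStar X x ⊆ nerveStar X y) : x = y :=
  hstar x y fun K ⟨hK, hxK⟩ => ⟨hK, h (show (⟨K, hK⟩ : MaxS X) ∈ nerveStar X x from hxK)⟩

theorem nerveStar_injective (hstar : ∀ x y : V, SigmaV X x ⊆ SigmaV X y → x = y) :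
    Injective (nerveStar X) :=
  fun _ _ h => eq_of_nerveStar_subset hstar h.le

variable [DecidableEq V]

theorem IsMaxSimplex.image {φ : Equiv.Perm V} (hφ : φ ∈ ComplexAut X) {K : Finset V}
    (hK : IsMaxSimplex X K) : IsMaxSimplex X (K.image φ) := by
  have hφX : ∀ s : Finset V, s ∈ X ↔ s.image φ ∈ X := hφ
  refine ⟨(hφX K).1 hK.1, fun L hL hKL => ?_⟩
  obtain ⟨M, rfl⟩ : ∃ M : Finset V, L = M.image φ := ⟨L.image φ.symm, by simp [image_image]⟩
  rw [hK.2 M ((hφX M).2 hL) ((image_subset_image_iff φ.injective).1 hKL)]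

theorem FiniteSubfamiliesIntersect.image {e : Equiv.Perm (MaxS X)} (he : e ∈ NerveAut X)
    {S : Set (MaxS X)} (hS : FiniteSubfamiliesIntersect X S) :
    FiniteSubfamiliesIntersect X (e '' S) := by
  intro σ hσ hne
  have hpre : ↑(σ.image e.symm) ⊆ S := by
    intro K hK
    obtain ⟨L, hL, rfl⟩ := mem_image.1 hK
    obtain ⟨M, hM, rfl⟩ := hσ hL
    simpa using hM
  have := (he _).1 (hS _ hpre (hne.image _))
  rwa [image_image, e.self_comp_symm, image_id] at this

theorem exists_image_nerveStar_eq (hfd : FinDim X) (hvert : ∀ x : V, ({x} : Finset V) ∈ X)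
    (hstar : ∀ x y : V, SigmaV X x ⊆ SigmaV X y → x = y) {e : Equiv.Perm (MaxS X)}
    (he : e ∈ NerveAut X) (x : V) : ∃ y, e '' nerveStar X x = nerveStar X y := by
  obtain ⟨y, hy⟩ := ((finiteSubfamiliesIntersect_nerveStar x).image he).exists_subset_nerveStar
    ((nerveStar_nonempty hfd hvert x).image e)
  obtain ⟨z, hz⟩ := ((finiteSubfamiliesIntersect_nerveStar y).image
    ((NerveAut X).inv_mem he)).exists_subset_nerveStar ((nerveStar_nonempty hfd hvert y).image _)
  obtain rfl : x = z :=
    eq_of_nerveStar_subset hstar fun K hK => hz ⟨e K, hy ⟨K, hK, rfl⟩, by simp⟩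
  exact ⟨y, hy.antisymm fun L hL => ⟨e⁻¹ L, hz ⟨L, hL, rfl⟩, by simp⟩⟩

def IsInducedBy (ψ : Equiv.Perm (MaxS X)) (φ : Equiv.Perm V) : Prop :=
  ∀ K : MaxS X, (ψ K).1 = K.1.image φ

section IsInducedBy

variable {ψ : Equiv.Perm (MaxS X)} {φ : Equiv.Perm V}

theorem IsInducedBy.mem_iff (h : IsInducedBy ψ φ) (x : V) (K : MaxS X) :
    x ∈ K.1 ↔ φ x ∈ (ψ K).1 := by
  rw [h, φ.injective.mem_finset_image]

theorem IsInducedBy.mem_nerveAut (h : IsInducedBy ψ φ) : ψ ∈ NerveAut X := by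
  intro σ
  simp only [NerveSimplexS, image_nonempty, forall_mem_image]
  refine and_congr_right' ⟨fun ⟨x, hx⟩ => ⟨φ x, fun K hK => (h.mem_iff x K).1 (hx K hK)⟩,
    fun ⟨y, hy⟩ => ⟨φ.symm y, fun K hK => (h.mem_iff _ K).2 (by simpa using hy hK)⟩⟩

theorem IsInducedBy.mem_complexAut (hX : IsComplex X) (hfd : FinDim X) (h : IsInducedBy ψ φ) :
    φ ∈ ComplexAut X := by
  intro s
  rw [hX.mem_iff_exists_superset hfd, hX.mem_iff_exists_superset hfd, image_nonempty]
  conv_rhs => rw [ψ.surjective.exists]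
  exact and_congr_right' (exists_congr fun K => by rw [h, image_subset_image_iff φ.injective])

theorem IsInducedBy.unique (hstar : ∀ x y : V, SigmaV X x ⊆ SigmaV X y → x = y)
    {φ' : Equiv.Perm V} (h : IsInducedBy ψ φ) (h' : IsInducedBy ψ φ') : φ = φ' := by
  ext x
  refine eq_of_nerveStar_subset hstar fun K hK => ?_
  obtain ⟨L, rfl⟩ := ψ.surjective K
  exact (h'.mem_iff x L).1 ((h.mem_iff x L).2 hK)

theorem exists_isInducedBy (hfd : FinDim X) (hvert : ∀ x : V, ({x} : Finset V) ∈ X)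
    (hstar : ∀ x y : V, SigmaV X x ⊆ SigmaV X y → x = y) (hψ : ψ ∈ NerveAut X) :
    ∃ φ : Equiv.Perm V, IsInducedBy ψ φ := by
  choose f hf using exists_image_nerveStar_eq hfd hvert hstar hψ
  have hf_inj : Injective f := fun x y hxy =>
    nerveStar_injective hstar (ψ.injective.image_injective (by rw [hf, hf, hxy]))
  have hf_surj : Surjective f := by
    intro y
    obtain ⟨z, hz⟩ := exists_image_nerveStar_eq hfd hvert hstar ((NerveAut X).inv_mem hψ) y
    refine ⟨z, nerveStar_injective hstar ?_⟩
    rw [← hf, ← hz, Set.image_image]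
    simp
  refine ⟨Equiv.ofBijective f ⟨hf_inj, hf_surj⟩, fun K => ?_⟩
  ext v
  show v ∈ (ψ K).1 ↔ v ∈ K.1.image f
  obtain ⟨x, rfl⟩ := hf_surj v
  rw [hf_inj.mem_finset_image]
  simpa [nerveStar] using (congrArg (ψ K ∈ ·) (hf x)).symm

end IsInducedBy

def nervePerm (φ : ComplexAut X) : Equiv.Perm (MaxS X) where
  toFun K := ⟨K.1.image φ, K.2.image φ.2⟩
  invFun K := ⟨K.1.image (φ⁻¹ : ComplexAut X), K.2.image (φ⁻¹).2⟩
  left_inv K := Subtype.ext (by simp [image_image])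
  right_inv K := Subtype.ext (by simp [image_image])

theorem isInducedBy_nervePerm (φ : ComplexAut X) : IsInducedBy (nervePerm φ) φ :=
  fun _ => rfl

variable (X) in
def nerveAutHom : ComplexAut X →* NerveAut X :=
  MonoidHom.mk' (fun φ => ⟨nervePerm φ, (isInducedBy_nervePerm φ).mem_nerveAut⟩) fun φ φ' => by
    ext K : 3
    simp [nervePerm, image_image]

theorem nerveAutHom_injective (hstar : ∀ x y : V, SigmaV X x ⊆ SigmaV X y → x = y) :
    Injective (nerveAutHom X) := fun φ φ' h =>
  Subtype.ext <| (isInducedBy_nervePerm φ).unique hstar <| by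
    rw [show nervePerm φ = nervePerm φ' from congrArg Subtype.val h]
    exact isInducedBy_nervePerm φ'

theorem nerveAutHom_surjective (hX : IsComplex X) (hfd : FinDim X)
    (hvert : ∀ x : V, ({x} : Finset V) ∈ X) (hstar : ∀ x y : V, SigmaV X x ⊆ SigmaV X y → x = y) :
    Surjective (nerveAutHom X) := by
  rintro ⟨ψ, hψ⟩
  obtain ⟨φ, hφ⟩ := exists_isInducedBy hfd hvert hstar hψ
  exact ⟨⟨φ, hφ.mem_complexAut hX hfd⟩, Subtype.ext <| Equiv.ext fun K => Subtype.ext (hφ K).symm⟩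

end Nerve

theorem stmt4_general {V : Type*} [DecidableEq V] (X : Set (Finset V))
    (hX : IsComplex X) (hfd : FinDim X)
    (hvert : ∀ x : V, ({x} : Finset V) ∈ X)
    (h1 : ∀ x y : V, SigmaV X x ⊆ SigmaV X y → x = y) :
    ∃ Ω : ComplexAut X ≃* NerveAut X,
      ∀ (φ : ComplexAut X) (K : MaxS X),
        (((Ω φ : Equiv.Perm (MaxS X))) K).1 = K.1.image ⇑(φ : Equiv.Perm V) :=
  ⟨MulEquiv.ofBijective (nerveAutHom X)
    ⟨nerveAutHom_injective h1, nerveAutHom_surjective hX hfd hvert h1⟩, fun _ _ => rfl⟩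

/-- Under hypotheses (i) and (ii), `Aut(X) ≅ Aut(N(X))` via the map sending an automorphism
`φ` of `X` to the induced map `K ↦ φ(K)` on maximal simplices. -/
theorem stmt4 {V : Type*} [DecidableEq V] (X : Set (Finset V))
    (hX : IsComplex X) (hfd : FinDim X)
    (hvert : ∀ x : V, ({x} : Finset V) ∈ X)
    (h1 : ∀ x y : V, SigmaV X x ⊆ SigmaV X y → x = y)
    (h2 : ∀ K ∈ X, ∀ x : V, x ∉ K → ∃ L, IsMaxSimplex X L ∧ K ⊆ L ∧ x ∉ L) :
    ∃ Ω : ComplexAut X ≃* NerveAut X,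
      ∀ (φ : ComplexAut X) (K : MaxS X),
        (((Ω φ : Equiv.Perm (MaxS X))) K).1 = K.1.image ⇑(φ : Equiv.Perm V) :=
  stmt4_general X hX hfd hvert h1
end

section
/- Let S be a closed oriented surface of genus g ≥ 2, let P be a maximal simplex of the curve complex C(S), and let H = ⟨T_a : a ∈ P⟩. Then the commensurator of H in Mod(S) equals Stab(P), the setwise stabilizer of P. -/
open Pointwise

/-- Pairwise disjointness for a set of curves. -/
def PDisjS {V : Type*} (i : V → V → ℕ) (A : Set V) : Prop :=
  ∀ x ∈ A, ∀ y ∈ A, x ≠ y → i x y = 0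

/-- A simplex of the curve complex. -/
def IsSimp {V : Type*} (i : V → V → ℕ) (s : Finset V) : Prop :=
  s.Nonempty ∧ PDisjS i ↑s

/-- A maximal simplex of the curve complex. -/
def IsMaxC {V : Type*} (i : V → V → ℕ) (s : Finset V) : Prop :=
  IsSimp i s ∧ ∀ t : Finset V, IsSimp i t → s ⊆ t → s = t

/-! If `f` commensurates `H = ⟨T_a : a ∈ P⟩`, then `fHf⁻¹ ∩ H = ⟨T_a : a ∈ f(P) ∩ P⟩` has finite
index in `H`, so by rank `f(P) ∩ P = P`, i.e. `P ⊆ f(P)`. Applying this to `f⁻¹` as well gives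
`f(P) = P`. Conversely, an element stabilizing `P` normalizes `H`. -/

section TwistSubgroups

variable {G V : Type*} [Group G] [MulAction G V] {T : V → G}

theorem conjAct_smul_closure_image (hconj : ∀ (f : G) (a : V), T (f • a) = f * T a * f⁻¹)
    (f : G) (A : Set V) :
    ConjAct.toConjAct f • Subgroup.closure (T '' A) = Subgroup.closure (T '' (f • A)) := by
  rw [Subgroup.smul_closure, ← Set.image_smul, ← Set.image_smul, Set.image_image,
    Set.image_image]
  simp only [hconj, ConjAct.toConjAct_smul]

theorem PDisjS.smul {i : V → V → ℕ} (hact : ∀ (f : G) (x y : V), i (f • x) (f • y) = i x y)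
    {A : Set V} (hA : PDisjS i A) (f : G) : PDisjS i (f • A) := by
  rintro _ ⟨x, hx, rfl⟩ _ ⟨y, hy, rfl⟩ hxy
  rw [hact]
  exact hA x hx y hy (ne_of_apply_ne _ hxy)

theorem subset_smul_of_mem_commensurator {i : V → V → ℕ}
    (hconj : ∀ (f : G) (a : V), T (f • a) = f * T a * f⁻¹)
    (hact : ∀ (f : G) (x y : V), i (f • x) (f • y) = i x y)
    (hmeet : ∀ A B : Set V, A.Finite → B.Finite → PDisjS i A → PDisjS i B →
      Subgroup.closure (T '' A) ⊓ Subgroup.closure (T '' B) =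
        Subgroup.closure (T '' (A ∩ B)))
    {P : Set V} (hPfin : P.Finite) (hPdisj : PDisjS i P)
    (hrank : ∀ A ⊆ P,
      (Subgroup.closure (T '' A)).relIndex (Subgroup.closure (T '' P)) ≠ 0 → A = P)
    {f : G} (hf : f ∈ Subgroup.Commensurable.commensurator (Subgroup.closure (T '' P))) :
    P ⊆ f • P := by
  have hindex : (Subgroup.closure (T '' (f • P ∩ P))).relIndex
      (Subgroup.closure (T '' P)) ≠ 0 := by
    rw [← hmeet _ _ hPfin.smul_set hPfin (hPdisj.smul hact f) hPdisj,
      ← conjAct_smul_closure_image hconj, Subgroup.inf_relIndex_right]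
    exact hf.1
  exact Set.inter_eq_right.mp (hrank _ Set.inter_subset_right hindex)

end TwistSubgroups

theorem stmt16_general {G V : Type*} [Group G] [MulAction G V]
    (i : V → V → ℕ) (T : V → G)
    (hconj : ∀ (f : G) (a : V), T (f • a) = f * T a * f⁻¹)
    (hact : ∀ (f : G) (x y : V), i (f • x) (f • y) = i x y)
    (hmeet : ∀ A B : Set V, A.Finite → B.Finite → PDisjS i A → PDisjS i B →
      Subgroup.closure (T '' A) ⊓ Subgroup.closure (T '' B) =
        Subgroup.closure (T '' (A ∩ B)))
    (P : Finset V) (hP : IsMaxC i P)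
    (hrank : ∀ A : Set V, A ⊆ ↑P →
      (Subgroup.closure (T '' A)).relIndex (Subgroup.closure (T '' (↑P : Set V))) ≠ 0 →
      A = ↑P) :
    Subgroup.Commensurable.commensurator (Subgroup.closure (T '' (↑P : Set V))) =
      MulAction.stabilizer G (↑P : Set V) := by
  have hsubset : ∀ {f : G}, f ∈ Subgroup.Commensurable.commensurator
      (Subgroup.closure (T '' (↑P : Set V))) → (↑P : Set V) ⊆ f • ↑P :=
    subset_smul_of_mem_commensurator hconj hact hmeet P.finite_toSet hP.1.2 hrank
  ext f
  rw [MulAction.mem_stabilizer_iff]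
  constructor
  · intro hf
    refine le_antisymm ?_ (hsubset hf)
    simpa only [smul_inv_smul] using Set.smul_set_mono (a := f) (hsubset (inv_mem hf))
  · intro hf
    rw [Subgroup.Commensurable.commensurator_mem_iff, conjAct_smul_closure_image hconj, hf]

/-- Abstract setting: `G = Mod(S)` acts on the curves `V`, `T` assigns Dehn twists,
twists conjugate via `T_{f(a)} = f T_a f⁻¹`, the action preserves intersection numbers,
twist subgroups of disjoint collections intersect in the twist subgroup of the
intersection, a finite-index subgroup of `H = ⟨T_a : a ∈ P⟩` generated by twists about a
subcollection must use all of `P` (since `H ≅ ℤ^{3g-3}`), and `H` has finite index in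
`Stab(P)`. Then the commensurator of `H` in `G` equals the setwise stabilizer of the
pants decomposition `P`. -/
theorem stmt16 {G V : Type*} [Group G] [MulAction G V]
    (g : ℕ) (hg : 2 ≤ g) (i : V → V → ℕ) (T : V → G)
    (hconj : ∀ (f : G) (a : V), T (f • a) = f * T a * f⁻¹)
    (hact : ∀ (f : G) (x y : V), i (f • x) (f • y) = i x y)
    (hmeet : ∀ A B : Set V, A.Finite → B.Finite → PDisjS i A → PDisjS i B →
      Subgroup.closure (T '' A) ⊓ Subgroup.closure (T '' B) =
        Subgroup.closure (T '' (A ∩ B)))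
    (P : Finset V) (hP : IsMaxC i P) (hcard : P.card = 3 * g - 3)
    (hrank : ∀ A : Set V, A ⊆ ↑P →
      (Subgroup.closure (T '' A)).relIndex (Subgroup.closure (T '' (↑P : Set V))) ≠ 0 →
      A = ↑P)
    (hfi : (Subgroup.closure (T '' (↑P : Set V))).relIndex
      (MulAction.stabilizer G (↑P : Set V)) ≠ 0) :
    Subgroup.Commensurable.commensurator (Subgroup.closure (T '' (↑P : Set V))) =
      MulAction.stabilizer G (↑P : Set V) :=
  stmt16_general i T hconj hact hmeet P hP hrank
end

section
/- Let S be a closed oriented surface of genus at least 2. For any two vertices x, y of the curve complex C(S), if Stab(x) = Stab(y) in Mod(S), then x = y. -/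
/-- Abstract setting: `G = Mod(S)` acts on the vertices `V` of the curve complex, with
symmetric intersection number `i` vanishing on the diagonal, Dehn twists `T` satisfying
`T_x(y) = y ↔ i(x,y) = 0`, and the separation property that distinct disjoint curves `x, y`
admit a curve `z` disjoint from `x` but not from `y`. Then curves with equal stabilizers
in `Mod(S)` are equal. -/
theorem stmt18 {G V : Type*} [Group G] [MulAction G V]
    (i : V → V → ℕ) (T : V → G)
    (hsymm : ∀ x y : V, i x y = i y x)
    (hself : ∀ x : V, i x x = 0)
    (hfix : ∀ x y : V, T x • y = y ↔ i x y = 0)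
    (hsep : ∀ x y : V, x ≠ y → i x y = 0 → ∃ z : V, i x z = 0 ∧ 0 < i y z)
    (x y : V) (h : MulAction.stabilizer G x = MulAction.stabilizer G y) :
    x = y := by
  by_contra hxy
  have hTx : T x ∈ MulAction.stabilizer G x := by
    simpa [MulAction.mem_stabilizer_iff, hfix] using hself x
  have hxy0 : i x y = 0 := by
    have := h ▸ hTx
    exact (hfix x y).mp this
  obtain ⟨z, hxz, hyz⟩ := hsep x y hxy hxy0
  have hTz : T z ∈ MulAction.stabilizer G x := by
    rw [MulAction.mem_stabilizer_iff, hfix]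
    rw [hsymm]; exact hxz
  have : i z y = 0 := (hfix z y).mp (by have := h ▸ hTz; exact this)
  rw [hsymm] at this
  omega
end

section
/- Let X be an abstract simplicial complex whose maximal simplices form a cover such that any two maximal simplices intersect in a (possibly empty) common face, i.e., all finite intersections of maximal simplices are empty or simplices. Then the geometric realization of X is homotopy equivalent to the geometric realization of the nerve N(X) of the collection of maximal simplices of X. -/
/-- The geometric realization of an abstract simplicial complex: the set of convex
coefficient functions supported on a simplex, topologised as a subspace of `V → ℝ`. -/
def realization {V : Type*} (X : Set (Finset V)) : Set (V → ℝ) :=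
  {f | (∀ v, 0 ≤ f v) ∧ ∃ s ∈ X, (∀ v, f v ≠ 0 → v ∈ s) ∧ ∑ v ∈ s, f v = 1}

/-- The nerve `N(X)` of the collection of maximal simplices of `X`: an abstract simplicial
complex whose vertices are the maximal simplices of `X`, a finite family being a simplex
iff it has nonempty common intersection. -/
def nerveComplex {V : Type*} (X : Set (Finset V)) :
    Set (Finset {K : Finset V // IsMaxSimplex X K}) :=
  {σ | σ.Nonempty ∧ ∃ x : V, ∀ K ∈ σ, x ∈ K.1}

/-!
Sending a simplex of `X` to a maximal simplex containing it is a simplicial map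
`F : sd X → N(X)` from the barycentric subdivision; sending a family of maximal simplices with
a common vertex to such a vertex is a simplicial map `G : sd N(X) → X`, because the
intersection of the family is a simplex. Composed with the homeomorphisms `|A| ≃ₜ |sd A|`
given by barycentric coordinates, `|F|` and `|G|` are homotopy inverse to each other: up to
homotopy, subdivision commutes with realizations of simplicial maps; `G ∘ sd F` and
`F ∘ sd G` are contiguous (their values on a simplex span a common simplex) to maps choosing a
vertex of the least simplex of a chain; such vertex-choosing maps approximate the inverse of
the subdivision homeomorphism; and contiguous maps are homotopic by straight-line homotopies.
-/

open Finset

namespace Realization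

variable {W W' : Type*}

open Classical in
noncomputable def fsupp (x : W → ℝ) : Finset W :=
  if h : (Function.support x).Finite then h.toFinset else ∅

section Support

variable {A : Set (Finset W)} {x : W → ℝ}

lemma support_finite (hx : x ∈ realization A) : (Function.support x).Finite := by
  obtain ⟨-, s, -, hs, -⟩ := hx
  exact s.finite_toSet.subset fun v hv => hs v hv

lemma mem_fsupp_of_finite (h : (Function.support x).Finite) {v : W} : v ∈ fsupp x ↔ x v ≠ 0 := by
  simp [fsupp, dif_pos h]

lemma mem_fsupp (hx : x ∈ realization A) {v : W} : v ∈ fsupp x ↔ x v ≠ 0 :=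
  mem_fsupp_of_finite (support_finite hx)

lemma eq_zero_of_notMem_fsupp (hx : x ∈ realization A) {v : W} (hv : v ∉ fsupp x) : x v = 0 :=
  not_not.1 fun h => hv ((mem_fsupp hx).2 h)

lemma pos_of_mem_fsupp (hx : x ∈ realization A) {v : W} (hv : v ∈ fsupp x) : 0 < x v :=
  (hx.1 v).lt_of_ne (Ne.symm ((mem_fsupp hx).1 hv))

lemma fsupp_subset (hx : x ∈ realization A) {s : Finset W} (hs : ∀ v, x v ≠ 0 → v ∈ s) :
    fsupp x ⊆ s :=
  fun v hv => hs v ((mem_fsupp hx).1 hv)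

lemma sum_eq_one (hx : x ∈ realization A) {E : Finset W} (hE : fsupp x ⊆ E) :
    ∑ v ∈ E, x v = 1 := by
  obtain ⟨-, s, -, hs, hsum⟩ := id hx
  have hzero : ∀ F : Finset W, fsupp x ⊆ F → ∑ v ∈ F, x v = ∑ v ∈ fsupp x, x v := fun F hF =>
    (sum_subset hF fun v _ hv => eq_zero_of_notMem_fsupp hx hv).symm
  rw [hzero E hE, ← hzero s (fsupp_subset hx hs), hsum]

lemma sum_fsupp (hx : x ∈ realization A) : ∑ v ∈ fsupp x, x v = 1 :=
  sum_eq_one hx subset_rfl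

lemma fsupp_nonempty (hx : x ∈ realization A) : (fsupp x).Nonempty := by
  by_contra h
  simpa [not_nonempty_iff_eq_empty.1 h] using sum_fsupp hx

lemma fsupp_mem (hA : IsComplex A) (hx : x ∈ realization A) : fsupp x ∈ A := by
  obtain ⟨-, s, hsA, hs, -⟩ := id hx
  exact hA.2 s hsA _ (fsupp_subset hx hs) (fsupp_nonempty hx)

lemma eq_of_le_of_mem_fsupp [DecidableEq W] {A' : Set (Finset W)} {y : W → ℝ}
    (hx : x ∈ realization A) (hy : y ∈ realization A') (hle : ∀ v ∈ fsupp x, x v ≤ y v) :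
    x = y := by
  set E := fsupp x ∪ fsupp y
  have hnonneg : ∀ v ∈ E, 0 ≤ y v - x v := by
    intro v _
    by_cases hv : v ∈ fsupp x
    · linarith [hle v hv]
    · rw [eq_zero_of_notMem_fsupp hx hv, sub_zero]
      exact hy.1 v
  have hsum : ∑ v ∈ E, (y v - x v) = 0 := by
    rw [sum_sub_distrib, sum_eq_one hy subset_union_right, sum_eq_one hx subset_union_left,
      sub_self]
  funext v
  by_cases hv : v ∈ E
  · linarith [(sum_eq_zero_iff_of_nonneg hnonneg).1 hsum v hv]
  · simp only [E, mem_union, not_or] at hv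
    rw [eq_zero_of_notMem_fsupp hx hv.1, eq_zero_of_notMem_fsupp hy hv.2]

end Support

section Chains

variable {γ : Type*} [DecidableEq γ] {S : Finset (Finset γ)}

lemma sup'_mem_of_isChain (hS : IsChain (· ⊆ ·) (S : Set (Finset γ))) (hne : S.Nonempty) :
    S.sup' hne id ∈ S :=
  sup'_mem (S : Set (Finset γ)) (fun a ha b hb => by
    rcases hS.total ha hb with h | h
    · rwa [sup_of_le_right h]
    · rwa [sup_of_le_left h]) S hne id fun _ h => h

lemma inf'_mem_of_isChain (hS : IsChain (· ⊆ ·) (S : Set (Finset γ))) (hne : S.Nonempty) :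
    S.inf' hne id ∈ S :=
  inf'_mem (S : Set (Finset γ)) (fun a ha b hb => by
    rcases hS.total ha hb with h | h
    · rwa [inf_of_le_left h]
    · rwa [inf_of_le_right h]) S hne id fun _ h => h

/-- The intersection of a family of finsets, `∅` for the empty family; for a chain it is the
least member. -/
noncomputable def chainMin (S : Finset (Finset γ)) : Finset γ :=
  if h : S.Nonempty then S.inf' h id else ∅

lemma chainMin_subset {t : Finset γ} (ht : t ∈ S) : chainMin S ⊆ t := by
  rw [chainMin, dif_pos ⟨t, ht⟩]
  exact inf'_le id ht

lemma chainMin_mem (hS : IsChain (· ⊆ ·) (S : Set (Finset γ))) (hne : S.Nonempty) :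
    chainMin S ∈ S := by
  rw [chainMin, dif_pos hne]
  exact inf'_mem_of_isChain hS hne

end Chains

noncomputable def someVertex [Nonempty W] (s : Finset W) : W := Classical.epsilon (· ∈ s)

lemma someVertex_mem [Nonempty W] {s : Finset W} (hs : s.Nonempty) : someVertex s ∈ s :=
  Classical.epsilon_spec hs

/-- The barycentric subdivision `sd A`. -/
def subdivision (A : Set (Finset W)) : Set (Finset (Finset W)) :=
  {S | S.Nonempty ∧ (∀ t ∈ S, t ∈ A) ∧ IsChain (· ⊆ ·) (S : Set (Finset W))}

lemma isComplex_subdivision (A : Set (Finset W)) : IsComplex (subdivision A) :=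
  ⟨fun _ hS => hS.1, fun _ hS _ hTS hT =>
    ⟨hT, fun t ht => hS.2.1 t (hTS ht), hS.2.2.mono (coe_subset.2 hTS)⟩⟩

lemma fsupp_mem_subdivision {A : Set (Finset W)} {z : Finset W → ℝ}
    (hz : z ∈ realization (subdivision A)) : fsupp z ∈ subdivision A :=
  fsupp_mem (isComplex_subdivision A) hz

lemma chainMin_mem_subdivision [DecidableEq W] {A : Set (Finset W)} {S : Finset (Finset W)}
    (hS : S ∈ subdivision A) : chainMin S ∈ S :=
  chainMin_mem hS.2.2 hS.1

def IsSimplicial [DecidableEq W'] (A : Set (Finset W)) (A' : Set (Finset W')) (φ : W → W') :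
    Prop :=
  ∀ s ∈ A, s.image φ ∈ A'

section Simplicial

variable {W'' : Type*} [DecidableEq W'] [DecidableEq W''] {A : Set (Finset W)}
  {A' : Set (Finset W')} {A'' : Set (Finset W'')} {φ : W → W'} {ψ : W' → W''}

lemma IsSimplicial.comp (hψ : IsSimplicial A' A'' ψ) (hφ : IsSimplicial A A' φ) :
    IsSimplicial A A'' (ψ ∘ φ) := fun s hs => by
  rw [← image_image]
  exact hψ _ (hφ s hs)

lemma IsSimplicial.subdivision (hφ : IsSimplicial A A' φ) :
    IsSimplicial (subdivision A) (subdivision A') (image φ) := by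
  rintro S ⟨hne, hmem, hchain⟩
  refine ⟨hne.image _, ?_, ?_⟩
  · simp only [mem_image]
    rintro _ ⟨t, ht, rfl⟩
    exact hφ t (hmem t ht)
  · rw [coe_image]
    exact hchain.image_of_map_rel (fun a b : Finset W => a ⊆ b) (fun a b : Finset W' => a ⊆ b) _
      fun _ _ => image_subset_image

lemma isSimplicial_of_forall_mem [DecidableEq W] (hA : IsComplex A) {l : Finset W → W}
    (hl : ∀ s ∈ A, l s ∈ s) : IsSimplicial (subdivision A) A l := by
  rintro S ⟨hne, hmem, hchain⟩
  refine hA.2 _ (hmem _ (sup'_mem_of_isChain hchain hne)) _ ?_ (hne.image _)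
  simp only [image_subset_iff]
  exact fun t ht => le_sup' id ht (hl t (hmem t ht))

def Contiguous (A : Set (Finset W)) (A' : Set (Finset W')) (φ ψ : W → W') : Prop :=
  ∀ s ∈ A, s.image φ ∪ s.image ψ ∈ A'

end Simplicial

/-- The affine extension of a vertex map to realizations. -/
noncomputable def push [DecidableEq W'] (φ : W → W') (x : W → ℝ) : W' → ℝ := fun w =>
  ∑ v ∈ (fsupp x).filter (φ · = w), x v

section Push

variable [DecidableEq W'] {A : Set (Finset W)} {A' : Set (Finset W')} {φ : W → W'} {x : W → ℝ}

lemma exists_of_push_ne_zero {w : W'} (h : push φ x w ≠ 0) : ∃ v ∈ fsupp x, φ v = w := by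
  obtain ⟨v, hv, -⟩ := exists_ne_zero_of_sum_ne_zero h
  exact ⟨v, (mem_filter.1 hv).1, (mem_filter.1 hv).2⟩

lemma push_mem (hφ : IsSimplicial A A' φ) (hx : x ∈ realization A) :
    push φ x ∈ realization A' := by
  obtain ⟨-, s, hsA, hs, -⟩ := id hx
  have hmaps : ∀ v ∈ fsupp x, φ v ∈ s.image φ := fun v hv =>
    mem_image_of_mem φ (fsupp_subset hx hs hv)
  refine ⟨fun w => sum_nonneg fun v _ => hx.1 v, s.image φ, hφ s hsA, fun w hw => ?_, ?_⟩
  · obtain ⟨v, hv, rfl⟩ := exists_of_push_ne_zero hw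
    exact hmaps v hv
  · exact (sum_fiberwise_of_maps_to hmaps x).trans (sum_fsupp hx)

lemma push_comp {W'' : Type*} [DecidableEq W''] {ψ : W' → W''} (hφ : IsSimplicial A A' φ)
    (hx : x ∈ realization A) :
    push (ψ ∘ φ) x = push ψ (push φ x) := by
  funext u
  have hpush := push_mem hφ hx
  have hmaps : ∀ v ∈ (fsupp x).filter (fun v => ψ (φ v) = u),
      φ v ∈ (fsupp (push φ x)).filter (ψ · = u) := by
    intro v hv
    obtain ⟨hv, hvu⟩ := mem_filter.1 hv
    refine mem_filter.2 ⟨(mem_fsupp hpush).2 (ne_of_gt ?_), hvu⟩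
    exact sum_pos' (fun w _ => hx.1 w) ⟨v, mem_filter.2 ⟨hv, rfl⟩, pos_of_mem_fsupp hx hv⟩
  change ∑ v ∈ (fsupp x).filter (fun v => ψ (φ v) = u), x v = _
  rw [← sum_fiberwise_of_maps_to hmaps]
  refine sum_congr rfl fun w hw => ?_
  rw [filter_filter]
  refine sum_congr (filter_congr fun v _ => ?_) fun _ _ => rfl
  rw [(mem_filter.1 hw).2.symm]
  exact ⟨fun h => h.2, fun h => ⟨h ▸ rfl, h⟩⟩

end Push

noncomputable def maxOutside [DecidableEq W] (x : W → ℝ) (t : Finset W) : ℝ :=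
  (fsupp x \ t).fold max 0 x

section Continuity

variable {A : Set (Finset W)} {x : W → ℝ}

lemma maxOutside_nonneg [DecidableEq W] (x : W → ℝ) (t : Finset W) : 0 ≤ maxOutside x t :=
  (le_fold_max _).2 (Or.inl le_rfl)

lemma le_maxOutside [DecidableEq W] (hx : x ∈ realization A) {t : Finset W} {v : W}
    (hv : v ∉ t) : x v ≤ maxOutside x t := by
  by_cases hvx : v ∈ fsupp x
  · exact (le_fold_max _).2 (Or.inr ⟨v, mem_sdiff.2 ⟨hvx, hv⟩, le_rfl⟩)
  · rw [eq_zero_of_notMem_fsupp hx hvx]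
    exact maxOutside_nonneg x t

lemma continuous_coord (v : W) : Continuous fun x : realization A => (x : W → ℝ) v :=
  (continuous_apply v).comp continuous_subtype_val

lemma continuous_fold_max (s : Finset W) :
    Continuous fun x : realization A => s.fold max 0 (x : W → ℝ) := by
  classical
  induction s using Finset.induction_on with
  | empty => exact continuous_const
  | insert v s hv ih =>
    simp only [fold_insert hv]
    exact (continuous_coord v).max ih

lemma continuous_of_squeeze {Y : Type*} [TopologicalSpace Y] {f : Y → ℝ}
    (h : ∀ y₀, ∃ l u : Y → ℝ, Continuous l ∧ Continuous u ∧ l ≤ f ∧ f ≤ u ∧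
      l y₀ = f y₀ ∧ u y₀ = f y₀) :
    Continuous f := by
  refine continuous_iff_continuousAt.2 fun y₀ => ?_
  obtain ⟨l, u, hl, hu, hlf, hfu, hl₀, hu₀⟩ := h y₀
  exact tendsto_of_tendsto_of_tendsto_of_le_of_le (hl₀ ▸ hl.tendsto y₀) (hu₀ ▸ hu.tendsto y₀)
    hlf hfu

lemma sum_fsupp_sdiff [DecidableEq W] (hx : x ∈ realization A) (E : Finset W) :
    ∑ v ∈ fsupp x \ E, x v = 1 - ∑ v ∈ E, x v := by
  rw [eq_sub_iff_add_eq, add_comm, ← sum_union disjoint_sdiff, union_sdiff_self_eq_union,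
    sum_eq_one hx subset_union_right]

/- The topology is the product topology, so only finitely many coordinates are controlled near
`x₀`. But the mass `1 - ∑ v ∈ E, x v` outside `E = fsupp x₀`, which is continuous and vanishes at
`x₀`, bounds what all the other coordinates can contribute. -/
lemma continuous_sum_mul (κ : W → ℝ) (h0 : ∀ v, 0 ≤ κ v) (h1 : ∀ v, κ v ≤ 1) :
    Continuous fun x : realization A => ∑ v ∈ fsupp (x : W → ℝ), κ v * (x : W → ℝ) v := by
  classical
  refine continuous_of_squeeze fun x₀ => ?_
  set E := fsupp (x₀ : W → ℝ)
  have hsplit : ∀ x : realization A, ∑ v ∈ fsupp (x : W → ℝ), κ v * (x : W → ℝ) v =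
      ∑ v ∈ E, κ v * (x : W → ℝ) v + ∑ v ∈ fsupp (x : W → ℝ) \ E, κ v * (x : W → ℝ) v := by
    intro x
    rw [← sum_inter_add_sum_sdiff _ E, inter_comm]
    congr 1
    refine sum_subset inter_subset_left fun v _ hv => ?_
    rw [eq_zero_of_notMem_fsupp x.2 fun h => hv (mem_inter.2 ⟨‹_›, h⟩), mul_zero]
  refine ⟨fun x => ∑ v ∈ E, κ v * (x : W → ℝ) v,
    fun x => ∑ v ∈ E, κ v * (x : W → ℝ) v + (1 - ∑ v ∈ E, (x : W → ℝ) v),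
    continuous_finsetSum _ fun v _ => continuous_const.mul (continuous_coord v),
    (continuous_finsetSum _ fun v _ => continuous_const.mul (continuous_coord v)).add
      (continuous_const.sub (continuous_finsetSum _ fun v _ => continuous_coord v)),
    fun x => ?_, fun x => ?_, rfl, ?_⟩
  · dsimp only
    rw [hsplit x, le_add_iff_nonneg_right]
    exact sum_nonneg fun v _ => mul_nonneg (h0 v) (x.2.1 v)
  · dsimp only
    rw [hsplit x, ← sum_fsupp_sdiff x.2]
    gcongr with v
    exact mul_le_of_le_one_left (x.2.1 v) (h1 v)
  · simp only [E, sum_fsupp x₀.2, sub_self, add_zero]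

lemma continuous_maxOutside [DecidableEq W] (t : Finset W) :
    Continuous fun x : realization A => maxOutside (x : W → ℝ) t := by
  refine continuous_of_squeeze fun x₀ => ?_
  set E := fsupp (x₀ : W → ℝ)
  have hl : Continuous fun x : realization A => (E \ t).fold max 0 (x : W → ℝ) :=
    continuous_fold_max _
  refine ⟨fun x => (E \ t).fold max 0 (x : W → ℝ),
    fun x => max ((E \ t).fold max 0 (x : W → ℝ)) (1 - ∑ v ∈ E, (x : W → ℝ) v),
    hl, hl.max (continuous_const.sub (continuous_finsetSum _ fun v _ => continuous_coord v)),
    fun x => ?_, fun x => ?_, by rfl, ?_⟩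
  · refine (fold_max_le _).2 ⟨maxOutside_nonneg _ t, fun v hv => ?_⟩
    exact le_maxOutside x.2 (mem_sdiff.1 hv).2
  · refine (fold_max_le _).2 ⟨?_, fun v hv => ?_⟩
    · exact le_max_of_le_left ((le_fold_max _).2 (Or.inl le_rfl))
    · obtain ⟨hvx, hvt⟩ := mem_sdiff.1 hv
      by_cases hvE : v ∈ E
      · exact le_max_of_le_left ((le_fold_max _).2 (Or.inr ⟨v, mem_sdiff.2 ⟨hvE, hvt⟩, le_rfl⟩))
      · refine le_max_of_le_right ?_
        rw [← sum_fsupp_sdiff x.2]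
        exact single_le_sum (fun w _ => x.2.1 w) (mem_sdiff.2 ⟨hvx, hvE⟩)
  · simp only [E, sum_fsupp x₀.2, sub_self]
    exact max_eq_left ((le_fold_max _).2 (Or.inl le_rfl))

end Continuity

section RealizationMap

variable [DecidableEq W'] {A : Set (Finset W)} {A' : Set (Finset W')} {φ : W → W'}

noncomputable def realizationMap (hφ : IsSimplicial A A' φ) :
    C(realization A, realization A') where
  toFun x := ⟨push φ x, push_mem hφ x.2⟩
  continuous_toFun := by
    refine (continuous_pi fun w => ?_).subtype_mk _
    convert continuous_sum_mul (A := A) (fun v => if φ v = w then 1 else 0)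
      (fun v => by split_ifs <;> norm_num) (fun v => by split_ifs <;> norm_num) using 2 with x
    rw [push, sum_filter]
    exact sum_congr rfl fun v _ => (boole_mul _ _).symm

lemma realizationMap_comp {W'' : Type*} [DecidableEq W''] {A'' : Set (Finset W'')}
    {ψ : W' → W''} (hψ : IsSimplicial A' A'' ψ) (hφ : IsSimplicial A A' φ) :
    realizationMap (hψ.comp hφ) = (realizationMap hψ).comp (realizationMap hφ) := by
  ext x : 2
  exact push_comp hφ x.2

end RealizationMap

lemma sum_sub_fold_max_filter_lt (S : Finset ℝ) (hS : ∀ a ∈ S, 0 ≤ a) :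
    ∑ a ∈ S, (a - (S.filter (· < a)).fold max 0 id) = S.fold max 0 id := by
  induction S using Finset.induction_on_max with
  | empty => simp
  | insert m S hlt ih =>
    have hm : m ∉ S := fun h => lt_irrefl m (hlt m h)
    have hfilter : ∀ a ∈ S, (insert m S).filter (· < a) = S.filter (· < a) := fun a ha => by
      rw [filter_insert, if_neg (not_lt.2 (hlt a ha).le)]
    have hfilter_m : (insert m S).filter (· < m) = S := by
      rw [filter_insert, if_neg (lt_irrefl m), filter_true_of_mem hlt]
    have hle : S.fold max 0 id ≤ m :=
      (fold_max_le _).2 ⟨hS m (mem_insert_self m S), fun a ha => (hlt a ha).le⟩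
    rw [sum_insert hm, hfilter_m, sum_congr rfl fun a ha => by rw [hfilter a ha],
      ih fun a ha => hS a (mem_insert_of_mem ha), fold_insert hm, id, max_eq_left hle]
    ring

section Levels

variable {x : W → ℝ}

noncomputable def values (x : W → ℝ) : Finset ℝ := (fsupp x).image x

noncomputable def levelSet (x : W → ℝ) (a : ℝ) : Finset W := (fsupp x).filter (a ≤ x ·)

lemma levelSet_subset (x : W → ℝ) (a : ℝ) : levelSet x a ⊆ fsupp x := filter_subset _ _

lemma mem_levelSet_self {v : W} (hv : v ∈ fsupp x) : v ∈ levelSet x (x v) :=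
  mem_filter.2 ⟨hv, le_rfl⟩

lemma levelSet_injOn : Set.InjOn (levelSet x) (values x) := by
  intro a ha b hb hab
  obtain ⟨v, hv, rfl⟩ := mem_image.1 ha
  obtain ⟨w, hw, rfl⟩ := mem_image.1 hb
  have hvw := mem_levelSet_self hv
  have hwv := mem_levelSet_self hw
  rw [hab] at hvw
  rw [← hab] at hwv
  exact le_antisymm (mem_filter.1 hwv).2 (mem_filter.1 hvw).2

end Levels

section Subdivision

variable [DecidableEq W] {A : Set (Finset W)} {x : W → ℝ}

noncomputable def levels (x : W → ℝ) : Finset (Finset W) := (values x).image (levelSet x)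

/-- The coordinates of `x` in the barycentric subdivision: `x` is the combination of the
barycenters of its superlevel sets `t` with weights `|t|` times the jump of `x` across `t`. -/
noncomputable def sdCoord (x : W → ℝ) (t : Finset W) : ℝ :=
  if h : t.Nonempty then t.card * max 0 (t.inf' h x - maxOutside x t) else 0

/-- The point of `|A|` whose coordinates in the barycentric subdivision are `z`. -/
noncomputable def barycenter (z : Finset W → ℝ) (v : W) : ℝ :=
  ∑ t ∈ (fsupp z).filter (v ∈ ·), z t / t.card

lemma sdCoord_nonneg (x : W → ℝ) (t : Finset W) : 0 ≤ sdCoord x t := by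
  unfold sdCoord
  split_ifs <;> positivity

lemma levels_mem_subdivision (hA : IsComplex A) (hx : x ∈ realization A) :
    levels x ∈ subdivision A := by
  refine ⟨((fsupp_nonempty hx).image x).image _, ?_, ?_⟩
  · simp only [levels, values, mem_image]
    rintro _ ⟨_, ⟨v, hv, rfl⟩, rfl⟩
    exact hA.2 _ (fsupp_mem hA hx) _ (levelSet_subset x _) ⟨v, mem_levelSet_self hv⟩
  · simp only [levels, coe_image]
    rintro _ ⟨a, -, rfl⟩ _ ⟨b, -, rfl⟩ -
    rcases le_total a b with h | h
    · exact Or.inr (monotone_filter_right _ fun w _ hw => h.trans hw)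
    · exact Or.inl (monotone_filter_right _ fun w _ hw => h.trans hw)

lemma mem_levels_of_sdCoord_ne_zero (hx : x ∈ realization A) {t : Finset W}
    (h : sdCoord x t ≠ 0) : t ∈ levels x := by
  obtain ⟨hne, h⟩ : ∃ hne : t.Nonempty, t.card * max 0 (t.inf' hne x - maxOutside x t) ≠ 0 := by
    by_cases hne : t.Nonempty
    · exact ⟨hne, by rwa [sdCoord, dif_pos hne] at h⟩
    · exact absurd (by rw [sdCoord, dif_neg hne]) h
  have hgap : maxOutside x t < t.inf' hne x := by
    by_contra hle
    exact h (by rw [max_eq_left (by linarith), mul_zero])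
  obtain ⟨w, hwt, hw⟩ := exists_mem_eq_inf' hne x
  have hpos : ∀ u ∈ t, u ∈ fsupp x := fun u hu => (mem_fsupp hx).2 <| ne_of_gt <|
    (maxOutside_nonneg x t).trans_lt (hgap.trans_le (inf'_le x hu))
  refine mem_image.2 ⟨x w, mem_image_of_mem x (hpos w hwt), ?_⟩
  ext u
  refine ⟨fun hu => ?_, fun hu => mem_filter.2 ⟨hpos u hu, hw ▸ inf'_le x hu⟩⟩
  by_contra hut
  have := le_maxOutside hx hut
  have := (mem_filter.1 hu).2
  linarith

lemma support_sdCoord_finite (hx : x ∈ realization A) : (Function.support (sdCoord x)).Finite :=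
  (levels x).finite_toSet.subset fun _ ht => mem_levels_of_sdCoord_ne_zero hx ht

lemma fsupp_sdCoord_subset (hx : x ∈ realization A) : fsupp (sdCoord x) ⊆ levels x := fun _ ht =>
  mem_levels_of_sdCoord_ne_zero hx ((mem_fsupp_of_finite (support_sdCoord_finite hx)).1 ht)

lemma sdCoord_levelSet {a : ℝ} (ha : a ∈ values x) (hx : x ∈ realization A) :
    sdCoord x (levelSet x a) / (levelSet x a).card =
      a - ((values x).filter (· < a)).fold max 0 id := by
  obtain ⟨w, hw, rfl⟩ := mem_image.1 ha
  have hne : (levelSet x (x w)).Nonempty := ⟨w, mem_levelSet_self hw⟩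
  have hinf : (levelSet x (x w)).inf' hne x = x w :=
    le_antisymm (inf'_le x (mem_levelSet_self hw)) (le_inf' hne x fun u hu => (mem_filter.1 hu).2)
  have hout : maxOutside x (levelSet x (x w)) = ((values x).filter (· < x w)).fold max 0 id := by
    have : fsupp x \ levelSet x (x w) = (fsupp x).filter (x · < x w) := by
      ext u
      simp only [levelSet, mem_sdiff, mem_filter, not_and, not_le]
      tauto
    rw [maxOutside, this, values, filter_image, fold_image_idem]
    rfl
  have hle : ((values x).filter (· < x w)).fold max 0 id ≤ x w :=
    (fold_max_le _).2 ⟨(pos_of_mem_fsupp hx hw).le, fun b hb => (mem_filter.1 hb).2.le⟩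
  have hcard : ((levelSet x (x w)).card : ℝ) ≠ 0 := by exact_mod_cast hne.card_pos.ne'
  rw [sdCoord, dif_pos hne, hinf, hout, max_eq_right (sub_nonneg.2 hle),
    mul_div_cancel_left₀ _ hcard]

/-- The layer-cake formula: `x v` is the sum of the jumps of `x` at its values up to `x v`. -/
lemma sum_sdCoord_div_card (hx : x ∈ realization A) {v : W} (hv : v ∈ fsupp x) :
    ∑ t ∈ (levels x).filter (v ∈ ·), sdCoord x t / t.card = x v := by
  set S := (values x).filter (· ≤ x v)
  have hlevels : (levels x).filter (v ∈ ·) = S.image (levelSet x) := by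
    rw [levels, filter_image]
    exact congrArg _ (filter_congr fun a _ => by simp [levelSet, hv])
  have hS : ∀ a ∈ S, (values x).filter (· < a) = S.filter (· < a) := fun a ha => by
    rw [filter_filter]
    exact filter_congr fun b _ => ⟨fun h => ⟨h.le.trans (mem_filter.1 ha).2, h⟩, And.right⟩
  have hmax : S.fold max 0 id = x v := le_antisymm
    ((fold_max_le _).2 ⟨hx.1 v, fun a ha => (mem_filter.1 ha).2⟩)
    ((le_fold_max _).2 (Or.inr ⟨x v, mem_filter.2 ⟨mem_image_of_mem x hv, le_rfl⟩, le_rfl⟩))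
  rw [hlevels, sum_image fun a ha b hb => levelSet_injOn (mem_filter.1 ha).1 (mem_filter.1 hb).1,
    sum_congr rfl fun a ha => by rw [sdCoord_levelSet (mem_filter.1 ha).1 hx, hS a ha],
    sum_sub_fold_max_filter_lt S fun a ha => ?_, hmax]
  obtain ⟨w, hw, rfl⟩ := mem_image.1 (mem_filter.1 ha).1
  exact hx.1 w

lemma barycenter_sdCoord (hx : x ∈ realization A) : barycenter (sdCoord x) = x := by
  funext v
  have hsum : barycenter (sdCoord x) v =
      ∑ t ∈ (levels x).filter (v ∈ ·), sdCoord x t / t.card := by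
    refine sum_subset (filter_subset_filter _ (fsupp_sdCoord_subset hx)) fun t ht hnot => ?_
    have : sdCoord x t = 0 := by
      by_contra h
      exact hnot (mem_filter.2
        ⟨(mem_fsupp_of_finite (support_sdCoord_finite hx)).2 h, (mem_filter.1 ht).2⟩)
    rw [this, zero_div]
  rw [hsum]
  by_cases hv : v ∈ fsupp x
  · exact sum_sdCoord_div_card hx hv
  · rw [eq_zero_of_notMem_fsupp hx hv, filter_false_of_mem, sum_empty]
    intro t ht hvt
    obtain ⟨a, -, rfl⟩ := mem_image.1 ht
    exact hv (levelSet_subset x a hvt)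

lemma sum_barycenter {z : Finset W → ℝ} {E : Finset W} (hE : ∀ t ∈ fsupp z, t ⊆ E)
    (hne : ∀ t ∈ fsupp z, t.Nonempty) : ∑ v ∈ E, barycenter z v = ∑ t ∈ fsupp z, z t := by
  simp only [barycenter, sum_filter]
  rw [sum_comm]
  refine sum_congr rfl fun t ht => ?_
  have hcard : (t.card : ℝ) ≠ 0 := by exact_mod_cast (hne t ht).card_pos.ne'
  rw [← sum_filter, filter_mem_eq_inter, inter_eq_right.2 (hE t ht), sum_const, nsmul_eq_mul,
    mul_div_cancel₀ _ hcard]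

lemma sdCoord_mem (hA : IsComplex A) (hx : x ∈ realization A) :
    sdCoord x ∈ realization (subdivision A) := by
  have hlevels := levels_mem_subdivision hA hx
  refine ⟨sdCoord_nonneg x, levels x, hlevels, fun _ ht => mem_levels_of_sdCoord_ne_zero hx ht,
    ?_⟩
  have hfin := support_sdCoord_finite hx
  rw [← sum_subset (fsupp_sdCoord_subset hx) fun t _ ht =>
      not_not.1 fun h => ht ((mem_fsupp_of_finite hfin).2 h),
    ← sum_barycenter (E := fsupp x) (fun t ht => ?_) (fun t ht => ?_), barycenter_sdCoord hx,
    sum_fsupp hx]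
  · obtain ⟨a, -, rfl⟩ := mem_image.1 (fsupp_sdCoord_subset hx ht)
    exact levelSet_subset x a
  · exact hA.1 t (hlevels.2.1 t (fsupp_sdCoord_subset hx ht))

lemma barycenter_mem (hA : IsComplex A) {z : Finset W → ℝ}
    (hz : z ∈ realization (subdivision A)) : barycenter z ∈ realization A := by
  obtain ⟨hne, hmem, hchain⟩ := fsupp_mem_subdivision hz
  have hsub : ∀ t ∈ fsupp z, t ⊆ (fsupp z).sup' hne id := fun t ht => le_sup' id ht
  refine ⟨fun v => sum_nonneg fun t _ => div_nonneg (hz.1 t) t.card.cast_nonneg,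
    _, hmem _ (sup'_mem_of_isChain hchain hne), fun v hv => ?_, ?_⟩
  · obtain ⟨t, ht, -⟩ := exists_ne_zero_of_sum_ne_zero hv
    exact hsub t (mem_filter.1 ht).1 (mem_filter.1 ht).2
  · rw [sum_barycenter hsub fun t ht => hA.1 t (hmem t ht), sum_fsupp hz]

/- On the chain `fsupp z`, the value of `barycenter z` at a vertex of `t₀` is at least
`z t₀ / |t₀| + Q`, and off `t₀` at most `Q`, where `Q` is the contribution of the strict
supersets of `t₀`. -/
lemma le_sdCoord_barycenter (hA : IsComplex A) {z : Finset W → ℝ}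
    (hz : z ∈ realization (subdivision A)) {t₀ : Finset W} (ht₀ : t₀ ∈ fsupp z) :
    z t₀ ≤ sdCoord (barycenter z) t₀ := by
  obtain ⟨-, hmem, hchain⟩ := fsupp_mem_subdivision hz
  have hne : t₀.Nonempty := hA.1 t₀ (hmem t₀ ht₀)
  have hterm : ∀ t, 0 ≤ z t / t.card := fun t => div_nonneg (hz.1 t) t.card.cast_nonneg
  set Q := ∑ t ∈ (fsupp z).filter (t₀ ⊂ ·), z t / t.card
  have hin : ∀ v ∈ t₀, z t₀ / t₀.card + Q ≤ barycenter z v := by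
    intro v hv
    have hsub : insert t₀ ((fsupp z).filter (t₀ ⊂ ·)) ⊆ (fsupp z).filter (v ∈ ·) := by
      refine insert_subset (mem_filter.2 ⟨ht₀, hv⟩) fun t ht => ?_
      exact mem_filter.2 ⟨(mem_filter.1 ht).1, (mem_filter.1 ht).2.subset hv⟩
    have hnot : t₀ ∉ (fsupp z).filter (t₀ ⊂ ·) := fun h => ssubset_irrefl t₀ (mem_filter.1 h).2
    calc z t₀ / t₀.card + Q = ∑ t ∈ insert t₀ ((fsupp z).filter (t₀ ⊂ ·)), z t / t.card :=
          by rw [sum_insert hnot]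
      _ ≤ _ := sum_le_sum_of_subset_of_nonneg hsub fun t _ _ => hterm t
  have hout : maxOutside (barycenter z) t₀ ≤ Q := by
    refine (fold_max_le _).2 ⟨sum_nonneg fun t _ => hterm t, fun w hw => ?_⟩
    have hwt₀ := (mem_sdiff.1 hw).2
    refine sum_le_sum_of_subset_of_nonneg (fun t ht => ?_) fun t _ _ => hterm t
    obtain ⟨ht, hwt⟩ := mem_filter.1 ht
    refine mem_filter.2 ⟨ht, ?_⟩
    rcases hchain.total ht ht₀ with h | h
    · exact absurd (h hwt) hwt₀
    · exact ssubset_of_subset_of_ne h fun h' => hwt₀ (h' ▸ hwt)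
  have hgap : z t₀ / t₀.card ≤ t₀.inf' hne (barycenter z) - maxOutside (barycenter z) t₀ := by
    have := le_inf' hne _ hin
    linarith
  have hcard : (0 : ℝ) < t₀.card := by exact_mod_cast hne.card_pos
  rw [sdCoord, dif_pos hne]
  calc z t₀ = t₀.card * (z t₀ / t₀.card) := (mul_div_cancel₀ _ hcard.ne').symm
    _ ≤ _ := by gcongr; exact le_max_of_le_right hgap

lemma sdCoord_barycenter (hA : IsComplex A) {z : Finset W → ℝ}
    (hz : z ∈ realization (subdivision A)) : sdCoord (barycenter z) = z :=
  (eq_of_le_of_mem_fsupp hz (sdCoord_mem hA (barycenter_mem hA hz))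
    fun _ ht => le_sdCoord_barycenter hA hz ht).symm

lemma continuous_sdCoord (t : Finset W) :
    Continuous fun x : realization A => sdCoord (x : W → ℝ) t := by
  by_cases ht : t.Nonempty
  · simp only [sdCoord, dif_pos ht]
    exact continuous_const.mul (continuous_const.max
      ((Continuous.finset_inf'_apply ht fun v _ => continuous_coord v).sub
        (continuous_maxOutside t)))
  · simp only [sdCoord, dif_neg ht]
    exact continuous_const

lemma continuous_barycenter (v : W) :
    Continuous fun z : realization (subdivision A) => barycenter (z : Finset W → ℝ) v := by
  convert continuous_sum_mul (A := subdivision A)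
    (fun t => if v ∈ t then ((t.card : ℝ))⁻¹ else 0) (fun t => by positivity)
    (fun t => ?_) using 2 with z
  · rw [barycenter, sum_filter]
    refine sum_congr rfl fun t _ => ?_
    split_ifs <;> simp [div_eq_inv_mul]
  · split_ifs with h
    · exact inv_le_one_of_one_le₀ (by exact_mod_cast card_pos.2 ⟨v, h⟩)
    · exact zero_le_one

noncomputable def sdHomeomorph (hA : IsComplex A) :
    realization A ≃ₜ realization (subdivision A) where
  toFun x := ⟨sdCoord x, sdCoord_mem hA x.2⟩
  invFun z := ⟨barycenter z, barycenter_mem hA z.2⟩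
  left_inv x := Subtype.ext (barycenter_sdCoord x.2)
  right_inv z := Subtype.ext (sdCoord_barycenter hA z.2)
  continuous_toFun := (continuous_pi continuous_sdCoord).subtype_mk _
  continuous_invFun := (continuous_pi continuous_barycenter).subtype_mk _

end Subdivision

section Homotopy

variable {A : Set (Finset W)} {Y : Type*} [TopologicalSpace Y]

lemma lineMap_mem {x y : W → ℝ} (hx : x ∈ realization A) (hy : y ∈ realization A) {s : Finset W}
    (hs : s ∈ A) (hxs : ∀ v, x v ≠ 0 → v ∈ s) (hys : ∀ v, y v ≠ 0 → v ∈ s) {r : ℝ}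
    (hr₀ : 0 ≤ r) (hr₁ : r ≤ 1) : (fun v => (1 - r) * x v + r * y v) ∈ realization A := by
  refine ⟨fun v => by nlinarith [hx.1 v, hy.1 v], s, hs, fun v hv => ?_, ?_⟩
  · by_contra hvs
    dsimp only at hv
    rw [not_not.1 (mt (hxs v) hvs), not_not.1 (mt (hys v) hvs)] at hv
    simp at hv
  · rw [sum_add_distrib, ← mul_sum, ← mul_sum, sum_eq_one hx (fsupp_subset hx hxs),
      sum_eq_one hy (fsupp_subset hy hys)]
    ring

lemma homotopic_of_forall_exists_simplex (f g : C(Y, realization A))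
    (h : ∀ y, ∃ s ∈ A, (∀ v, (f y : W → ℝ) v ≠ 0 → v ∈ s) ∧ ∀ v, (g y : W → ℝ) v ≠ 0 → v ∈ s) :
    f.Homotopic g := by
  set F : unitInterval × Y → W → ℝ :=
    fun p v => (1 - p.1) * (f p.2 : W → ℝ) v + p.1 * (g p.2 : W → ℝ) v
  have hmem : ∀ p, F p ∈ realization A := fun p => by
    obtain ⟨s, hs, hfs, hgs⟩ := h p.2
    exact lineMap_mem (f p.2).2 (g p.2).2 hs hfs hgs p.1.2.1 p.1.2.2
  have hcont : Continuous F := continuous_pi fun v => by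
    have hf : Continuous fun p : unitInterval × Y => (f p.2 : W → ℝ) v :=
      (continuous_coord v).comp (f.continuous.comp continuous_snd)
    have hg : Continuous fun p : unitInterval × Y => (g p.2 : W → ℝ) v :=
      (continuous_coord v).comp (g.continuous.comp continuous_snd)
    have ht : Continuous fun p : unitInterval × Y => (p.1 : ℝ) :=
      continuous_subtype_val.comp continuous_fst
    exact ((continuous_const.sub ht).mul hf).add (ht.mul hg)
  exact ⟨{
    toFun := fun p => ⟨F p, hmem p⟩
    continuous_toFun := hcont.subtype_mk _
    map_zero_left := fun y => by ext v; simp [F]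
    map_one_left := fun y => by ext v; simp [F] }⟩

variable [DecidableEq W'] {A' : Set (Finset W')}

lemma mem_image_of_push_ne_zero {φ : W → W'} {x : W → ℝ} (hx : x ∈ realization A)
    {s : Finset W} (hs : ∀ v, x v ≠ 0 → v ∈ s) {w : W'} (hw : push φ x w ≠ 0) :
    w ∈ s.image φ := by
  obtain ⟨v, hv, rfl⟩ := exists_of_push_ne_zero hw
  exact mem_image_of_mem φ (fsupp_subset hx hs hv)

lemma realizationMap_homotopic {φ ψ : W → W'} (hφ : IsSimplicial A A' φ)
    (hψ : IsSimplicial A A' ψ) (h : Contiguous A A' φ ψ) :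
    (realizationMap hφ).Homotopic (realizationMap hψ) := by
  refine homotopic_of_forall_exists_simplex _ _ fun x => ?_
  obtain ⟨-, s, hs, hxs, -⟩ := x.2
  exact ⟨_, h s hs, fun w hw => mem_union_left _ (mem_image_of_push_ne_zero x.2 hxs hw),
    fun w hw => mem_union_right _ (mem_image_of_push_ne_zero x.2 hxs hw)⟩

variable [DecidableEq W]

lemma realizationMap_homotopic_sdHomeomorph_symm (hA : IsComplex A) {l : Finset W → W}
    (hl : ∀ s ∈ A, l s ∈ s) :
    (realizationMap (isSimplicial_of_forall_mem hA hl)).Homotopic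
      ((sdHomeomorph hA).symm : C(_, _)) := by
  refine homotopic_of_forall_exists_simplex _ _ fun z => ?_
  obtain ⟨hne, hmem, hchain⟩ := fsupp_mem_subdivision z.2
  have hsub : ∀ t ∈ fsupp (z : Finset W → ℝ), t ⊆ (fsupp (z : Finset W → ℝ)).sup' hne id :=
    fun t ht => le_sup' id ht
  refine ⟨_, hmem _ (sup'_mem_of_isChain hchain hne), fun w hw => ?_, fun v hv => ?_⟩
  · obtain ⟨t, ht, rfl⟩ := exists_of_push_ne_zero hw
    exact hsub t ht (hl t (hmem t ht))
  · obtain ⟨t, ht, -⟩ := exists_ne_zero_of_sum_ne_zero hv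
    exact hsub t (mem_filter.1 ht).1 (mem_filter.1 ht).2

lemma sdHomeomorph_comp_realizationMap_homotopic (hA : IsComplex A) (hA' : IsComplex A')
    {φ : W → W'} (hφ : IsSimplicial A A' φ) :
    ((sdHomeomorph hA' : C(_, _)).comp (realizationMap hφ)).Homotopic
      ((realizationMap hφ.subdivision).comp (sdHomeomorph hA : C(_, _))) := by
  have key : (((sdHomeomorph hA').symm : C(_, _)).comp
      ((realizationMap hφ.subdivision).comp (sdHomeomorph hA : C(_, _)))).Homotopic
      (realizationMap hφ) := by
    refine homotopic_of_forall_exists_simplex _ _ fun x => ?_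
    obtain ⟨-, s, hs, hxs, -⟩ := x.2
    refine ⟨_, hφ s hs, fun v hv => ?_, fun w hw => mem_image_of_push_ne_zero x.2 hxs hw⟩
    obtain ⟨T, hT, hvT⟩ := exists_ne_zero_of_sum_ne_zero hv
    obtain ⟨t, ht, rfl⟩ := exists_of_push_ne_zero ((mem_fsupp (push_mem hφ.subdivision
      (sdCoord_mem hA x.2))).1 (mem_filter.1 hT).1)
    obtain ⟨a, -, rfl⟩ := mem_image.1 (fsupp_sdCoord_subset x.2 ht)
    exact image_subset_image ((levelSet_subset _ a).trans (fsupp_subset x.2 hxs))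
      (mem_filter.1 hT).2
  have := (ContinuousMap.Homotopic.refl
    (sdHomeomorph hA' : C(realization A', realization (subdivision A')))).comp key.symm
  rwa [← ContinuousMap.comp_assoc, Homeomorph.toContinuousMap_comp_symm,
    ContinuousMap.id_comp] at this

end Homotopy

section Approximation

variable [DecidableEq W] [DecidableEq W'] {A : Set (Finset W)} {B : Set (Finset W')}

/- With `h` the homeomorphisms `|A| ≃ₜ |sd A|`:
`|ψ| ∘ h ∘ |φ| ∘ h ≃ |ψ| ∘ |sd φ| ∘ h ∘ h ≃ |l| ∘ |chainMin| ∘ h ∘ h ≃ |l| ∘ h ≃ id`. -/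
theorem realizationMap_comp_homotopic_id (hA : IsComplex A) (hB : IsComplex B)
    {φ : Finset W → W'} (hφ : IsSimplicial (subdivision A) B φ)
    {ψ : Finset W' → W} (hψ : IsSimplicial (subdivision B) A ψ)
    {l : Finset W → W} (hl : ∀ s ∈ A, l s ∈ s)
    (hcont : Contiguous (subdivision (subdivision A)) A (ψ ∘ image φ) (l ∘ chainMin)) :
    (((realizationMap hψ).comp (sdHomeomorph hB : C(_, _))).comp
      ((realizationMap hφ).comp (sdHomeomorph hA : C(_, _)))).Homotopic (ContinuousMap.id _) := by
  have hsdA := isComplex_subdivision A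
  have hmin : IsSimplicial (subdivision (subdivision A)) (subdivision A) chainMin :=
    isSimplicial_of_forall_mem hsdA fun _ hS => chainMin_mem_subdivision hS
  have hl' := isSimplicial_of_forall_mem hA hl
  let e : C(realization A, realization (subdivision A)) := sdHomeomorph hA
  let e' : C(realization (subdivision A), realization (subdivision (subdivision A))) :=
    sdHomeomorph hsdA
  have h₁ := sdHomeomorph_comp_realizationMap_homotopic hsdA hB hφ
  have h₂ := realizationMap_homotopic (hψ.comp hφ.subdivision) (hl'.comp hmin) hcont
  rw [realizationMap_comp hψ hφ.subdivision, realizationMap_comp hl' hmin] at h₂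
  have h₃ := (realizationMap_homotopic_sdHomeomorph_symm hsdA
    fun _ hS => chainMin_mem_subdivision hS).comp (ContinuousMap.Homotopic.refl e')
  rw [Homeomorph.symm_comp_toContinuousMap] at h₃
  have h₄ := (realizationMap_homotopic_sdHomeomorph_symm hA hl).comp
    (ContinuousMap.Homotopic.refl e)
  rw [Homeomorph.symm_comp_toContinuousMap] at h₄
  have rfl_e := ContinuousMap.Homotopic.refl e
  exact (((ContinuousMap.Homotopic.refl _).comp h₁).comp rfl_e).trans
    (((h₂.comp (ContinuousMap.Homotopic.refl e')).comp rfl_e).trans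
      (((ContinuousMap.Homotopic.refl _).comp (h₃.comp rfl_e)).trans h₄))

end Approximation

end Realization

open Realization

section Nerve

variable {V : Type*} {X : Set (Finset V)}

abbrev MaxSimplex (X : Set (Finset V)) := {K : Finset V // IsMaxSimplex X K}

def MaxSimplicesMeetInFaces (X : Set (Finset V)) : Prop :=
  ∀ σ : Finset (Finset V), (∀ K ∈ σ, IsMaxSimplex X K) → σ.Nonempty →
    (∀ x : V, ¬ (∀ K ∈ σ, x ∈ K)) ∨ ∃ t ∈ X, ∀ x : V, x ∈ t ↔ ∀ K ∈ σ, x ∈ K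

noncomputable def maxSimplexOf [Nonempty (MaxSimplex X)] (s : Finset V) : MaxSimplex X :=
  Classical.epsilon fun K => s ⊆ K.1

noncomputable def commonVertex [Nonempty V] (σ : Finset (MaxSimplex X)) : V :=
  Classical.epsilon fun v => ∀ K ∈ σ, v ∈ K.1

lemma subset_maxSimplexOf [Nonempty (MaxSimplex X)]
    (hcover : ∀ s ∈ X, ∃ K, IsMaxSimplex X K ∧ s ⊆ K) {s : Finset V} (hs : s ∈ X) :
    s ⊆ (maxSimplexOf s : MaxSimplex X).1 := by
  obtain ⟨K, hK, hsK⟩ := hcover s hs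
  exact Classical.epsilon_spec (p := fun K : MaxSimplex X => s ⊆ K.1) ⟨⟨K, hK⟩, hsK⟩

lemma commonVertex_mem [Nonempty V] {σ : Finset (MaxSimplex X)} (hσ : σ ∈ nerveComplex X) :
    ∀ K ∈ σ, commonVertex σ ∈ K.1 :=
  Classical.epsilon_spec hσ.2

lemma isComplex_nerveComplex (X : Set (Finset V)) : IsComplex (nerveComplex X) :=
  ⟨fun _ hσ => hσ.1, fun _ hσ _ hτσ hτ =>
    ⟨hτ, hσ.2.imp fun _ hv K hK => hv K (hτσ hK)⟩⟩

variable [DecidableEq V]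

lemma mem_of_forall_mem_maxSimplex (hX : IsComplex X)
    (hcap : MaxSimplicesMeetInFaces X)
    {σ : Finset (MaxSimplex X)} (hσ : σ.Nonempty) {u : Finset V} (hu : u.Nonempty)
    (h : ∀ v ∈ u, ∀ K ∈ σ, v ∈ K.1) : u ∈ X := by
  have hmax : ∀ K ∈ σ.image Subtype.val, IsMaxSimplex X K := by
    simp only [mem_image]
    rintro _ ⟨K, -, rfl⟩
    exact K.2
  have hin : ∀ v ∈ u, ∀ K ∈ σ.image Subtype.val, v ∈ K := by
    simp only [mem_image]
    rintro v hv _ ⟨K, hK, rfl⟩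
    exact h v hv K hK
  obtain ⟨v, hv⟩ := hu
  rcases hcap _ hmax (hσ.image _) with hempty | ⟨t, ht, hteq⟩
  · exact absurd (hin v hv) (hempty v)
  · exact hX.2 t ht u (fun w hw => (hteq w).2 (hin w hw)) ⟨v, hv⟩

lemma isSimplicial_maxSimplexOf [Nonempty (MaxSimplex X)] (hX : IsComplex X)
    (hcover : ∀ s ∈ X, ∃ K, IsMaxSimplex X K ∧ s ⊆ K) :
    IsSimplicial (subdivision X) (nerveComplex X) maxSimplexOf := by
  intro C hC
  obtain ⟨v, hv⟩ := hX.1 _ (hC.2.1 _ (chainMin_mem_subdivision hC))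
  refine ⟨hC.1.image _, v, fun K hK => ?_⟩
  obtain ⟨s, hs, rfl⟩ := mem_image.1 hK
  exact subset_maxSimplexOf hcover (hC.2.1 s hs) (chainMin_subset hs hv)

lemma isSimplicial_commonVertex [Nonempty V] (hX : IsComplex X)
    (hcap : MaxSimplicesMeetInFaces X) :
    IsSimplicial (subdivision (nerveComplex X)) X commonVertex := by
  intro S hS
  have hmin := hS.2.1 _ (chainMin_mem_subdivision hS)
  refine mem_of_forall_mem_maxSimplex hX hcap hmin.1 (hS.1.image _) fun v hv K hK => ?_
  obtain ⟨σ, hσ, rfl⟩ := mem_image.1 hv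
  exact commonVertex_mem (hS.2.1 σ hσ) K (chainMin_subset hσ hK)

lemma contiguous_commonVertex_comp_image_maxSimplexOf [Nonempty V] [Nonempty (MaxSimplex X)]
    (hX : IsComplex X) (hcover : ∀ s ∈ X, ∃ K, IsMaxSimplex X K ∧ s ⊆ K)
    (hcap : MaxSimplicesMeetInFaces X) :
    Contiguous (subdivision (subdivision X)) X (commonVertex ∘ image (maxSimplexOf (X := X)))
      (someVertex ∘ chainMin) := by
  intro D hD
  have hC₁ := hD.2.1 _ (chainMin_mem_subdivision hD)
  refine mem_of_forall_mem_maxSimplex hX hcap (hC₁.1.image (maxSimplexOf (X := X)))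
    ((hD.1.image _).mono subset_union_left) fun v hv K hK => ?_
  obtain ⟨s, hs, rfl⟩ := mem_image.1 hK
  rcases mem_union.1 hv with hv | hv <;> obtain ⟨C, hC, rfl⟩ := mem_image.1 hv
  · exact commonVertex_mem (isSimplicial_maxSimplexOf hX hcover C (hD.2.1 C hC)) _
      (mem_image_of_mem _ (chainMin_subset hC hs))
  · have hCmin := chainMin_mem_subdivision (hD.2.1 C hC)
    refine subset_maxSimplexOf hcover (hC₁.2.1 s hs) (chainMin_subset (chainMin_subset hC hs) ?_)
    exact someVertex_mem (hX.1 _ ((hD.2.1 C hC).2.1 _ hCmin))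

lemma contiguous_maxSimplexOf_comp_image_commonVertex [Nonempty V] [Nonempty (MaxSimplex X)]
    (hX : IsComplex X) (hcover : ∀ s ∈ X, ∃ K, IsMaxSimplex X K ∧ s ⊆ K)
    (hcap : MaxSimplicesMeetInFaces X) :
    Contiguous (subdivision (subdivision (nerveComplex X))) (nerveComplex X)
      (maxSimplexOf ∘ image commonVertex) (someVertex ∘ chainMin) := by
  intro T hT
  have hS₁ := hT.2.1 _ (chainMin_mem_subdivision hT)
  have hσ₁ := hS₁.2.1 _ (chainMin_mem_subdivision hS₁)
  refine ⟨(hT.1.image _).mono subset_union_left, commonVertex (chainMin (chainMin T)),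
    fun K hK => ?_⟩
  rcases mem_union.1 hK with hK | hK <;> obtain ⟨S, hS, rfl⟩ := mem_image.1 hK
  · refine subset_maxSimplexOf hcover (isSimplicial_commonVertex hX hcap S (hT.2.1 S hS))
      (mem_image_of_mem _ (chainMin_subset hS (chainMin_mem_subdivision hS₁)))
  · have hSmin := (hT.2.1 S hS).2.1 _ (chainMin_mem_subdivision (hT.2.1 S hS))
    refine commonVertex_mem hσ₁ _ ?_
    exact chainMin_subset (chainMin_subset hS (chainMin_mem_subdivision hS₁))
      (someVertex_mem hSmin.1)

end Nerve

/-- Nerve theorem for the cover by maximal simplices: if every simplex of `X` lies in a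
maximal simplex and every finite intersection of maximal simplices is empty or a simplex
of `X` (hence contractible), then the geometric realization of `X` is homotopy equivalent
to the geometric realization of the nerve `N(X)` of the maximal simplices. -/
theorem stmt19 {V : Type*} (X : Set (Finset V)) (hX : IsComplex X)
    (hcover : ∀ s ∈ X, ∃ K, IsMaxSimplex X K ∧ s ⊆ K)
    (hcap : ∀ σ : Finset (Finset V), (∀ K ∈ σ, IsMaxSimplex X K) → σ.Nonempty →
      (∀ x : V, ¬ (∀ K ∈ σ, x ∈ K)) ∨ ∃ t ∈ X, ∀ x : V, x ∈ t ↔ ∀ K ∈ σ, x ∈ K) :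
    Nonempty (ContinuousMap.HomotopyEquiv (realization X) (realization (nerveComplex X))) := by
  classical
  rcases isEmpty_or_nonempty (MaxSimplex X) with hK | hK
  · have : IsEmpty (realization X) := ⟨fun x => by
      obtain ⟨-, s, hs, -⟩ := x.2
      obtain ⟨K, hK', -⟩ := hcover s hs
      exact hK.false ⟨K, hK'⟩⟩
    have : IsEmpty (realization (nerveComplex X)) := ⟨fun x => by
      obtain ⟨-, σ, hσ, -⟩ := x.2
      exact hK.false hσ.1.choose⟩
    exact ⟨Homeomorph.empty.toHomotopyEquiv⟩
  · obtain ⟨K⟩ := id hK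
    have : Nonempty V := (hX.1 K.1 K.2.1).to_subtype.map Subtype.val
    have hN := isComplex_nerveComplex X
    have hF := isSimplicial_maxSimplexOf hX hcover
    have hG := isSimplicial_commonVertex hX hcap
    exact ⟨⟨_, _,
      realizationMap_comp_homotopic_id hX hN hF hG (fun s hs => someVertex_mem (hX.1 s hs))
        (contiguous_commonVertex_comp_image_maxSimplexOf hX hcover hcap),
      realizationMap_comp_homotopic_id hN hX hG hF (fun σ hσ => someVertex_mem hσ.1)
        (contiguous_maxSimplexOf_comp_image_commonVertex hX hcover hcap)⟩⟩
end
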